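/- arXiv:1511.08009 — 2 statements merged into one kernel-verified Lean document; each statement's English description precedes it below -/
import Mathlib

section
/- Let C be a planar convex body that is k-rotationally symmetric about a point p in its interior, for an integer k ≥ 3. Then the maximum relative diameter of the standard k-partition of C satisfies d_M(P_k) = diam(C ∩ S_k) = max{R, 2 r sin(π/k)}. -/
/-!
The supporting lines of `C` at `x` and at `ρ_k x` are tangent to the inscribed disc of radius `r`,
so, with `p` moved to the origin, the piece `C ∩ S_k` lies in the kite bounded by the two rays of
the sector and these two tangent lines, and in the disc of radius `R`. For two points `y, z` of
this set, either `‖y‖ ^ 2 ≤ 2 ⟪y, z⟫` (or the same with `y, z` exchanged), and then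
`‖y - z‖ ≤ ‖z‖ ≤ R`, or both can be pushed radially outwards onto the tangent segments without
decreasing `‖y - z‖`. These segments span a triangle with vertices `x`, `ρ_k x` and the corner of
the kite, whose longest side is the chord `2 r sin (π / k)` because `k ≥ 3`. Conversely, that
chord lies in the piece, and by symmetry every point of `C`, in particular a farthest one from
`p`, has a rotate in the piece at the same distance from `p`.
-/

open Metric Set

/-- Rotation of angle `α` about the point `p` in the plane `ℂ`. -/
noncomputable def rot (p : ℂ) (α : ℝ) : ℂ → ℂ :=
  fun z => p + Complex.exp (α * Complex.I) * (z - p)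

/-- A planar convex body: a compact convex subset of the plane with nonempty interior. -/
def IsConvexBody (C : Set ℂ) : Prop :=
  IsCompact C ∧ Convex ℝ C ∧ (interior C).Nonempty

/-- `C` is `k`-rotationally symmetric about `p`: the rotation of angle `2π/k`
about `p` maps `C` onto itself. -/
def IsRotSym (C : Set ℂ) (p : ℂ) (k : ℕ) : Prop :=
  rot p (2 * Real.pi / k) '' C = C

/-- The closed convex sector at `p` spanned by `x - p` and `ρ_k(x) - p`. -/
noncomputable def sector (p x : ℂ) (k : ℕ) : Set ℂ :=
  {z | ∃ a b : ℝ, 0 ≤ a ∧ 0 ≤ b ∧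
    z = p + (a : ℂ) * (x - p) + (b : ℂ) * (rot p (2 * Real.pi / k) x - p)}

/-- The maximum relative diameter of the standard `k`-partition of `C`
(with center `p` and endpoint `x`): the diameter of one piece `C ∩ S_k`. -/
noncomputable def dM (C : Set ℂ) (p x : ℂ) (k : ℕ) : ℝ :=
  Metric.diam (C ∩ sector p x k)

/-- The circumradius of `C` with respect to `p`: `sup_{y ∈ C} dist p y`. -/
noncomputable def circumrad (C : Set ℂ) (p : ℂ) : ℝ :=
  ⨆ y ∈ C, dist p y

open scoped RealInnerProductSpace

lemma smul_add_smul_mem_segment {E : Type*} [AddCommGroup E] [Module ℝ E] (u v : E)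
    {a b c : ℝ} (hb : 0 ≤ b) (hc : -1 < c) (hc1 : c < 1) (h₁ : a + c * b = 1)
    (h₂ : c * a + b ≤ 1) : a • u + b • v ∈ segment ℝ u ((1 + c)⁻¹ • (u + v)) := by
  have hc0 : 0 < 1 + c := by linarith
  refine ⟨1 - b * (1 + c), b * (1 + c), ?_, by positivity, by ring, ?_⟩
  · nlinarith
  · rw [smul_smul, mul_assoc, mul_inv_cancel₀ hc0.ne', mul_one, smul_add, ← add_assoc,
      ← add_smul]
    congr 2
    linarith

lemma ball_infDist_frontier_subset_interior {E : Type*} [NormedAddCommGroup E]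
    [NormedSpace ℝ E] {C : Set E} {p : E} (hp : p ∈ interior C) :
    ball p (infDist p (frontier C)) ⊆ interior C := by
  rcases le_or_gt (infDist p (frontier C)) 0 with hr | hr
  · simp [ball_eq_empty.2 hr]
  refine (convex_ball p _).isPreconnected.subset_of_closure_inter_subset isOpen_interior
    ⟨p, mem_ball_self hr, hp⟩ ?_
  rintro y ⟨hyc, hyb⟩
  by_contra hyi
  have hyf : y ∈ frontier C := ⟨closure_mono interior_subset hyc, hyi⟩
  rw [mem_ball, dist_comm] at hyb
  exact (infDist_le_dist_of_mem hyf).not_gt hyb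

section InnerProductSpace

variable {E : Type*} [NormedAddCommGroup E] [InnerProductSpace ℝ E]

lemma norm_sub_le_of_norm_sq_le_two_inner {a b : E} (h : ‖a‖ ^ 2 ≤ 2 * ⟪a, b⟫) :
    ‖a - b‖ ≤ ‖b‖ := by
  refine (pow_le_pow_iff_left₀ (norm_nonneg _) (norm_nonneg _) two_ne_zero).1 ?_
  rw [norm_sub_sq_real]
  linarith

lemma norm_sub_le_norm_smul_sub_smul {a b : E} {s t : ℝ} (ha : 2 * ⟪a, b⟫ ≤ ‖a‖ ^ 2)
    (hb : 2 * ⟪a, b⟫ ≤ ‖b‖ ^ 2) (hs : 1 ≤ s) (ht : 1 ≤ t) : ‖a - b‖ ≤ ‖s • a - t • b‖ := by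
  refine (pow_le_pow_iff_left₀ (norm_nonneg _) (norm_nonneg _) two_ne_zero).1 ?_
  rw [norm_sub_sq_real, norm_sub_sq_real, norm_smul, norm_smul, inner_smul_left,
    inner_smul_right, Real.norm_of_nonneg (by linarith), Real.norm_of_nonneg (by linarith)]
  simp only [conj_trivial]
  have hs2 : 0 ≤ s ^ 2 - 1 := by nlinarith
  have ht2 : 0 ≤ t ^ 2 - 1 := by nlinarith
  have hst : 0 ≤ s * t - 1 := by nlinarith
  rcases le_total ⟪a, b⟫ 0 with hab | hab
  · nlinarith [mul_nonneg hs2 (sq_nonneg ‖a‖), mul_nonneg ht2 (sq_nonneg ‖b‖),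
      mul_nonpos_of_nonneg_of_nonpos hst hab]
  · nlinarith [mul_le_mul_of_nonneg_left ha hs2, mul_le_mul_of_nonneg_left hb ht2,
      mul_nonneg hab (sq_nonneg (s - t)), mul_nonneg hab hst]

lemma inner_sub_le_norm_sq_of_ball_subset_interior {C : Set E} (hC : Convex ℝ C) {p x y : E}
    (hball : ball p ‖x - p‖ ⊆ interior C) (hx : x ∉ interior C) (hy : y ∈ C) :
    ⟪y - p, x - p⟫ ≤ ‖x - p‖ ^ 2 := by
  by_contra! hyx
  set u := x - p
  set w := y - p
  set d := ⟪w, u⟫ - ‖u‖ ^ 2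
  have hd : 0 < d := by linarith
  have hw : 0 < ‖w‖ ^ 2 := by
    refine pow_pos (norm_pos_iff.2 fun h => ?_) 2
    simp only [h, inner_zero_left] at hyx
    linarith [sq_nonneg ‖u‖]
  set t := d / (d + ‖w‖ ^ 2)
  have ht0 : 0 < t := by positivity
  have ht1 : t < 1 := (div_lt_one (by positivity)).2 (by linarith)
  have htd : t * (d + ‖w‖ ^ 2) = d := div_mul_cancel₀ _ (by positivity)
  -- `x` lies strictly between `y` and the point `z` of the open ball below
  set z := p + (1 - t)⁻¹ • (u - t • w)
  have hz : z ∈ ball p ‖u‖ := by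
    rw [mem_ball, dist_eq_norm, add_sub_cancel_left, norm_smul,
      Real.norm_of_nonneg (by simp only [inv_nonneg]; linarith), inv_mul_lt_iff₀ (by linarith)]
    refine (pow_lt_pow_iff_left₀ (norm_nonneg _) (by nlinarith [norm_nonneg u]) two_ne_zero).1 ?_
    rw [norm_sub_sq_real, norm_smul, real_inner_smul_right, real_inner_comm, mul_pow,
      Real.norm_of_nonneg ht0.le]
    nlinarith
  refine hx (hC.openSegment_interior_self_subset_interior (hball hz) hy
    ⟨1 - t, t, by linarith, ht0, by ring, ?_⟩)
  rw [smul_add, smul_smul, mul_inv_cancel₀ (by linarith), one_smul]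
  simp only [u, w]
  module

variable {u v : E} {c : ℝ}

-- For `c = cos θ` this says `tan (θ / 2) ≤ 2 sin (θ / 2)`, which holds exactly when `θ ≤ 2π/3`.
lemma norm_sub_inv_smul_add_le (hv : ‖v‖ = ‖u‖) (huv : ⟪u, v⟫ = c * ‖u‖ ^ 2) (hc : -(1 / 2) ≤ c)
    (hc1 : c ≤ 1) : ‖u - (1 + c)⁻¹ • (u + v)‖ ≤ ‖u - v‖ := by
  have hc0 : 0 < 1 + c := by linarith
  have h : u - (1 + c)⁻¹ • (u + v) = (1 + c)⁻¹ • (c • u - v) := by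
    match_scalars
    · field_simp
      ring
    · field_simp
  rw [h, norm_smul, Real.norm_of_nonneg (by positivity), inv_mul_le_iff₀ hc0]
  refine (pow_le_pow_iff_left₀ (norm_nonneg _) (by positivity) two_ne_zero).1 ?_
  rw [mul_pow, norm_sub_sq_real, norm_sub_sq_real, norm_smul, inner_smul_left, huv, hv,
    Real.norm_eq_abs, mul_pow, sq_abs]
  simp only [conj_trivial]
  nlinarith [mul_nonneg (mul_nonneg (sq_nonneg ‖u‖) (sub_nonneg.2 hc1)) hc0.le]

lemma norm_sub_le_of_mem_convexHull (hv : ‖v‖ = ‖u‖) (huv : ⟪u, v⟫ = c * ‖u‖ ^ 2)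
    (hc : -(1 / 2) ≤ c) (hc1 : c ≤ 1) {y z : E}
    (hy : y ∈ convexHull ℝ {u, (1 + c)⁻¹ • (u + v), v})
    (hz : z ∈ convexHull ℝ {u, (1 + c)⁻¹ • (u + v), v}) : ‖y - z‖ ≤ ‖u - v‖ := by
  have hu_w := norm_sub_inv_smul_add_le hv huv hc hc1
  have hv_w : ‖v - (1 + c)⁻¹ • (u + v)‖ ≤ ‖u - v‖ := by
    rw [add_comm u v, norm_sub_rev u]
    exact norm_sub_inv_smul_add_le hv.symm (by rw [real_inner_comm, huv, hv]) hc hc1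
  generalize (1 + c)⁻¹ • (u + v) = w at *
  obtain ⟨y', hy', z', hz', h⟩ := convexHull_exists_dist_ge2 hy hz
  rw [dist_eq_norm, dist_eq_norm] at h
  refine h.trans ?_
  simp only [mem_insert_iff, mem_singleton_iff] at hy' hz'
  rcases hy' with rfl | rfl | rfl <;> rcases hz' with rfl | rfl | rfl <;>
    first
    | simp
    | assumption
    | rw [norm_sub_rev]; assumption
    | exact (norm_sub_rev _ _).le

/-- The quadrilateral cut out of the cone spanned by `u` and `v` by the lines through `u` and `v`
perpendicular to them; when `⟪u, v⟫ = c * ‖u‖ ^ 2` its fourth vertex is `(1 + c)⁻¹ • (u + v)`. -/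
def kite (u v : E) : Set E :=
  {y | ∃ a b : ℝ, 0 ≤ a ∧ 0 ≤ b ∧ y = a • u + b • v ∧ ⟪y, u⟫ ≤ ‖u‖ ^ 2 ∧ ⟪y, v⟫ ≤ ‖v‖ ^ 2}

lemma exists_one_le_smul_mem_convexHull (hv : ‖v‖ = ‖u‖) (huv : ⟪u, v⟫ = c * ‖u‖ ^ 2)
    (hc : -1 < c) (hc1 : c < 1) {y : E} (hy : y ∈ kite u v) (hy0 : y ≠ 0) :
    ∃ τ : ℝ, 1 ≤ τ ∧ τ • y ∈ convexHull ℝ {u, (1 + c)⁻¹ • (u + v), v} := by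
  obtain ⟨a, b, ha, hb, rfl, hyu, hyv⟩ := hy
  have hu0 : 0 < ‖u‖ ^ 2 := by
    refine pow_pos (norm_pos_iff.2 fun hu => hy0 ?_) 2
    rw [hu, norm_zero, norm_eq_zero] at hv
    simp [hu, hv]
  have hab : 0 < a + b := by
    refine lt_of_le_of_ne (by positivity) fun h => hy0 ?_
    obtain ⟨rfl, rfl⟩ : a = 0 ∧ b = 0 := ⟨by linarith, by linarith⟩
    simp
  have hinner (w : E) : ⟪a • u + b • v, w⟫ = a * ⟪u, w⟫ + b * ⟪v, w⟫ := by
    rw [inner_add_left, real_inner_smul_left, real_inner_smul_left]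
  rw [hinner, real_inner_self_eq_norm_sq, real_inner_comm, huv] at hyu
  rw [hinner, real_inner_self_eq_norm_sq, huv, hv] at hyv
  have h₁ : a + c * b ≤ 1 := le_of_mul_le_mul_right (by linarith) hu0
  have h₂ : c * a + b ≤ 1 := le_of_mul_le_mul_right (by linarith) hu0
  rcases le_total (c * a + b) (a + c * b) with h | h
  · have hm : 0 < a + c * b := by nlinarith
    refine ⟨(a + c * b)⁻¹, (one_le_inv₀ hm).2 h₁, ?_⟩
    rw [smul_add (a + c * b)⁻¹, smul_smul, smul_smul]
    refine segment_subset_convexHull (by simp) (by simp)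
      (smul_add_smul_mem_segment u v (by positivity) hc hc1 (by field_simp) ?_)
    calc c * ((a + c * b)⁻¹ * a) + (a + c * b)⁻¹ * b = (c * a + b) / (a + c * b) := by ring
      _ ≤ 1 := (div_le_one hm).2 h
  · have hm : 0 < c * a + b := by nlinarith
    refine ⟨(c * a + b)⁻¹, (one_le_inv₀ hm).2 h₂, ?_⟩
    have hseg := smul_add_smul_mem_segment v u (a := (c * a + b)⁻¹ * b)
      (b := (c * a + b)⁻¹ * a) (by positivity) hc hc1 (by field_simp; ring) ?_
    · rw [smul_add (c * a + b)⁻¹, smul_smul, smul_smul, add_comm (_ • u)]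
      rw [add_comm v u] at hseg
      exact segment_subset_convexHull (by simp) (by simp) hseg
    calc c * ((c * a + b)⁻¹ * b) + (c * a + b)⁻¹ * a = (a + c * b) / (c * a + b) := by ring
      _ ≤ 1 := (div_le_one hm).2 h

theorem norm_sub_le_max_of_mem_kite (hv : ‖v‖ = ‖u‖) (huv : ⟪u, v⟫ = c * ‖u‖ ^ 2)
    (hc : -(1 / 2) ≤ c) (hc1 : c < 1) {y z : E} (hy : y ∈ kite u v) (hz : z ∈ kite u v)
    {R : ℝ} (hyR : ‖y‖ ≤ R) (hzR : ‖z‖ ≤ R) : ‖y - z‖ ≤ max R ‖u - v‖ := by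
  by_cases hyz : ‖y‖ ^ 2 ≤ 2 * ⟪y, z⟫
  · exact (norm_sub_le_of_norm_sq_le_two_inner hyz).trans (hzR.trans (le_max_left _ _))
  by_cases hzy : ‖z‖ ^ 2 ≤ 2 * ⟪z, y⟫
  · rw [norm_sub_rev]
    exact (norm_sub_le_of_norm_sq_le_two_inner hzy).trans (hyR.trans (le_max_left _ _))
  rw [not_le] at hyz hzy
  rw [real_inner_comm] at hzy
  have hy0 : y ≠ 0 := by rintro rfl; simp at hyz
  have hz0 : z ≠ 0 := by rintro rfl; simp at hzy
  obtain ⟨τ, hτ, hτy⟩ := exists_one_le_smul_mem_convexHull hv huv (by linarith) hc1 hy hy0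
  obtain ⟨σ, hσ, hσz⟩ := exists_one_le_smul_mem_convexHull hv huv (by linarith) hc1 hz hz0
  calc ‖y - z‖ ≤ ‖τ • y - σ • z‖ := norm_sub_le_norm_smul_sub_smul hyz.le hzy.le hτ hσ
    _ ≤ ‖u - v‖ := norm_sub_le_of_mem_convexHull hv huv hc hc1.le hτy hσz
    _ ≤ max R ‖u - v‖ := le_max_right _ _

end InnerProductSpace

lemma rot_sub (p : ℂ) (α : ℝ) (z : ℂ) : rot p α z - p = rotation (Circle.exp α) (z - p) := by
  simp [rot, rotation_apply, Circle.coe_exp]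

lemma dist_center_rot (p : ℂ) (α : ℝ) (z : ℂ) : dist p (rot p α z) = dist p z := by
  rw [dist_comm, dist_eq_norm, rot_sub, LinearIsometryEquiv.norm_map, ← dist_eq_norm, dist_comm]

lemma inner_rot_sub_rot_sub (p : ℂ) (α : ℝ) (y z : ℂ) :
    ⟪rot p α y - p, rot p α z - p⟫ = ⟪y - p, z - p⟫ := by
  rw [rot_sub, rot_sub, LinearIsometryEquiv.inner_map_map]

lemma norm_rot_sub (p : ℂ) (α : ℝ) (z : ℂ) : ‖rot p α z - p‖ = ‖z - p‖ := by
  rw [rot_sub, LinearIsometryEquiv.norm_map]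

lemma inner_sub_rot_sub (p : ℂ) (α : ℝ) (z : ℂ) :
    ⟪z - p, rot p α z - p⟫ = Real.cos α * ‖z - p‖ ^ 2 := by
  rw [rot_sub, rotation_apply, Circle.coe_exp, Complex.inner, mul_assoc, Complex.mul_conj,
    Complex.normSq_eq_norm_sq, Complex.re_mul_ofReal,
    Complex.exp_ofReal_mul_I_re]

lemma dist_self_rot (p : ℂ) (α : ℝ) (z : ℂ) :
    dist z (rot p α z) = 2 * ‖z - p‖ * |Real.sin (α / 2)| := by
  rw [dist_comm, dist_eq_norm, show rot p α z - z = (rot p α z - p) - (z - p) by ring, rot_sub,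
    rotation_apply, Circle.coe_exp, ← sub_one_mul, norm_mul, mul_comm (α : ℂ),
    Complex.norm_exp_I_mul_ofReal_sub_one, norm_mul, Real.norm_eq_abs, Real.norm_eq_abs]
  simp only [abs_two]
  ring

lemma rot_rot (p : ℂ) (α β : ℝ) (z : ℂ) : rot p α (rot p β z) = rot p (α + β) z := by
  simp only [rot, add_sub_cancel_left, ← mul_assoc, ← Complex.exp_add, Complex.ofReal_add,
    add_mul]

lemma rot_zero (p : ℂ) : rot p 0 = id := by
  ext z; simp [rot]

lemma image_rot_natCast_mul {C : Set ℂ} {p : ℂ} {α : ℝ} (h : rot p α '' C = C) (j : ℕ) :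
    rot p (j * α) '' C = C := by
  induction j with
  | zero => rw [Nat.cast_zero, zero_mul, rot_zero, image_id]
  | succ j ih =>
    have : rot p ((j + 1 : ℕ) * α) = rot p α ∘ rot p (j * α) := by
      ext z; simp only [Function.comp_apply, rot_rot]; push_cast; ring_nf
    rw [this, image_comp, ih, h]

lemma rot_injective (p : ℂ) (α : ℝ) : Function.Injective (rot p α) := by
  intro y z h
  simpa [rot, Complex.exp_ne_zero] using h

lemma exists_exp_mul_I_eq_add_mul_exp_mul_I {θ χ : ℝ} (hθ : 0 < θ) (hθπ : θ < Real.pi)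
    (hχ : 0 ≤ χ) (hχθ : χ ≤ θ) : ∃ a b : ℝ, 0 ≤ a ∧ 0 ≤ b ∧
      Complex.exp (χ * Complex.I) = a + b * Complex.exp (θ * Complex.I) := by
  have hs : 0 < Real.sin θ := Real.sin_pos_of_pos_of_lt_pi hθ hθπ
  -- law of sines
  refine ⟨Real.sin (θ - χ) / Real.sin θ, Real.sin χ / Real.sin θ,
    div_nonneg (Real.sin_nonneg_of_nonneg_of_le_pi (by linarith) (by linarith)) hs.le,
    div_nonneg (Real.sin_nonneg_of_nonneg_of_le_pi hχ (by linarith)) hs.le, ?_⟩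
  apply Complex.ext <;>
    simp only [Complex.add_re, Complex.add_im, Complex.mul_re, Complex.mul_im, Complex.ofReal_re,
      Complex.ofReal_im, Complex.exp_ofReal_mul_I_re, Complex.exp_ofReal_mul_I_im, Real.sin_sub] <;>
    field_simp <;> ring

lemma exists_eq_exp_mul_I_mul {θ : ℝ} (hθ : 0 < θ) (hθπ : θ < Real.pi) (ζ : ℂ) :
    ∃ j : ℕ, ∃ a b : ℝ, 0 ≤ a ∧ 0 ≤ b ∧
      ζ = Complex.exp ((j * θ : ℝ) * Complex.I) * (a + b * Complex.exp (θ * Complex.I)) := by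
  set ψ := Complex.arg ζ + 2 * Real.pi
  have hψ : 0 ≤ ψ := by linarith [Complex.neg_pi_lt_arg ζ]
  have hζ : ζ = ‖ζ‖ * Complex.exp (ψ * Complex.I) := by
    rw [Complex.ofReal_add, add_mul, Complex.exp_add, Complex.ofReal_mul, Complex.ofReal_ofNat,
      Complex.exp_two_pi_mul_I, mul_one, Complex.norm_mul_exp_arg_mul_I]
  set j := ⌊ψ / θ⌋₊
  have hj : j * θ ≤ ψ := (le_div_iff₀ hθ).1 (Nat.floor_le (by positivity))
  have hj' : ψ < (j + 1) * θ := (div_lt_iff₀ hθ).1 (Nat.lt_floor_add_one _)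
  obtain ⟨a, b, ha, hb, hab⟩ :=
    exists_exp_mul_I_eq_add_mul_exp_mul_I (χ := ψ - j * θ) hθ hθπ (by linarith) (by linarith)
  refine ⟨j, ‖ζ‖ * a, ‖ζ‖ * b, by positivity, by positivity, ?_⟩
  conv_lhs => rw [hζ, show ψ = j * θ + (ψ - j * θ) by ring, Complex.ofReal_add, add_mul,
    Complex.exp_add, hab]
  push_cast
  ring

lemma two_pi_div_lt_pi {k : ℕ} (hk : 3 ≤ k) : 2 * Real.pi / k < Real.pi := by
  rw [div_lt_iff₀ (by positivity)]
  have : (3 : ℝ) ≤ k := by exact_mod_cast hk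
  nlinarith [Real.pi_pos]

lemma exists_rot_mem_sector {p x : ℂ} {k : ℕ} (hk : 3 ≤ k) (hxp : x ≠ p) (y : ℂ) :
    ∃ j : ℕ, ∃ y' ∈ sector p x k, rot p (j * (2 * Real.pi / k)) y' = y := by
  obtain ⟨j, a, b, ha, hb, hab⟩ :=
    exists_eq_exp_mul_I_mul (by positivity) (two_pi_div_lt_pi hk) ((y - p) / (x - p))
  refine ⟨j, p + (a + b * Complex.exp ((2 * Real.pi / k : ℝ) * Complex.I)) * (x - p),
    ⟨a, b, ha, hb, by simp only [rot]; ring⟩, ?_⟩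
  rw [div_eq_iff (sub_ne_zero.2 hxp)] at hab
  simp only [rot, add_sub_cancel_left, ← mul_assoc, ← hab]
  ring

lemma exists_mem_inter_sector_dist_eq {C : Set ℂ} {p x y : ℂ} {k : ℕ} (hk : 3 ≤ k)
    (hsym : IsRotSym C p k) (hxp : x ≠ p) (hy : y ∈ C) :
    ∃ y' ∈ C ∩ sector p x k, dist p y' = dist p y := by
  obtain ⟨j, y', hy', rfl⟩ := exists_rot_mem_sector hk hxp y
  rw [← image_rot_natCast_mul hsym j] at hy
  obtain ⟨z, hz, hzy⟩ := hy
  obtain rfl := rot_injective _ _ hzy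
  exact ⟨z, ⟨hz, hy'⟩, (dist_center_rot p _ z).symm⟩

lemma dist_le_circumrad {C : Set ℂ} (hC : Bornology.IsBounded C) (p : ℂ) {y : ℂ} (hy : y ∈ C) :
    dist p y ≤ circumrad C p := by
  obtain ⟨M, hM⟩ := hC.subset_closedBall p
  refine le_ciSup_of_le ⟨max M 0, ?_⟩ y (by rw [ciSup_pos hy])
  rintro _ ⟨z, rfl⟩
  exact Real.iSup_le (fun hz => (mem_closedBall'.1 (hM hz)).trans (le_max_left _ _))
    (le_max_right _ _)

lemma circumrad_le {C : Set ℂ} {p : ℂ} {b : ℝ} (hb : 0 ≤ b) (h : ∀ y ∈ C, dist p y ≤ b) :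
    circumrad C p ≤ b :=
  Real.iSup_le (fun y => Real.iSup_le (h y) hb) hb

lemma neg_half_le_cos_two_pi_div {k : ℕ} (hk : 3 ≤ k) : -(1 / 2) ≤ Real.cos (2 * Real.pi / k) := by
  have h : Real.cos (Real.pi - Real.pi / 3) ≤ Real.cos (2 * Real.pi / k) := by
    refine Real.cos_le_cos_of_nonneg_of_le_pi (by positivity) (by linarith [Real.pi_pos]) ?_
    rw [show Real.pi - Real.pi / 3 = 2 * Real.pi / 3 by ring]
    exact div_le_div_of_nonneg_left (by positivity) (by norm_num) (by exact_mod_cast hk)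
  rwa [Real.cos_pi_sub, Real.cos_pi_div_three] at h

lemma cos_two_pi_div_lt_one {k : ℕ} (hk : 3 ≤ k) : Real.cos (2 * Real.pi / k) < 1 := by
  simpa using Real.cos_lt_cos_of_nonneg_of_le_pi le_rfl (two_pi_div_lt_pi hk).le
    (by positivity : 0 < 2 * Real.pi / k)

lemma sub_mem_kite_of_mem_inter_sector {C : Set ℂ} {p x y : ℂ} {k : ℕ} (hC : Convex ℝ C)
    (hsym : IsRotSym C p k) (hball : ball p ‖x - p‖ ⊆ interior C) (hx : x ∉ interior C)
    (hy : y ∈ C ∩ sector p x k) : y - p ∈ kite (x - p) (rot p (2 * Real.pi / k) x - p) := by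
  obtain ⟨hyC, a, b, ha, hb, hy⟩ := hy
  refine ⟨a, b, ha, hb, by rw [hy, Complex.real_smul, Complex.real_smul]; ring,
    inner_sub_le_norm_sq_of_ball_subset_interior hC hball hx hyC, ?_⟩
  obtain ⟨z, hz, rfl⟩ : y ∈ rot p (2 * Real.pi / k) '' C := (hsym : _ = C).symm ▸ hyC
  rw [inner_rot_sub_rot_sub, norm_rot_sub]
  exact inner_sub_le_norm_sq_of_ball_subset_interior hC hball hx hz

lemma dist_self_rot_two_pi_div (p z : ℂ) {k : ℕ} (hk : 1 ≤ k) :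
    dist z (rot p (2 * Real.pi / k) z) = 2 * ‖z - p‖ * Real.sin (Real.pi / k) := by
  rw [dist_self_rot, show 2 * Real.pi / k / 2 = Real.pi / k by ring,
    abs_of_nonneg (Real.sin_nonneg_of_nonneg_of_le_pi (by positivity)
      (div_le_self Real.pi_pos.le (by exact_mod_cast hk)))]

lemma dist_le_max_of_mem_inter_sector {C : Set ℂ} {p x y z : ℂ} {k : ℕ} {R : ℝ}
    (hC : Convex ℝ C) (hk : 3 ≤ k) (hsym : IsRotSym C p k)
    (hball : ball p ‖x - p‖ ⊆ interior C) (hx : x ∉ interior C) (hR : ∀ y ∈ C, dist p y ≤ R)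
    (hy : y ∈ C ∩ sector p x k) (hz : z ∈ C ∩ sector p x k) :
    dist y z ≤ max R (dist x (rot p (2 * Real.pi / k) x)) := by
  have hRn {w : ℂ} (hw : w ∈ C ∩ sector p x k) : ‖w - p‖ ≤ R := by
    rw [← dist_eq_norm, dist_comm]
    exact hR w hw.1
  rw [dist_eq_norm, ← sub_sub_sub_cancel_right y z p, dist_eq_norm,
    ← sub_sub_sub_cancel_right x _ p]
  exact norm_sub_le_max_of_mem_kite (norm_rot_sub p _ x) (inner_sub_rot_sub p _ x)
    (neg_half_le_cos_two_pi_div hk) (cos_two_pi_div_lt_one hk)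
    (sub_mem_kite_of_mem_inter_sector hC hsym hball hx hy)
    (sub_mem_kite_of_mem_inter_sector hC hsym hball hx hz)
    (hRn hy) (hRn hz)

/-- For a `k`-rotationally symmetric planar convex body (`k ≥ 3`), the maximum
relative diameter of the standard `k`-partition equals `max {R, 2 r sin(π/k)}`. -/
theorem stmt_3 (C : Set ℂ) (p x : ℂ) (k : ℕ) (hC : IsConvexBody C)
    (hk : 3 ≤ k) (hsym : IsRotSym C p k) (hp : p ∈ interior C)
    (hx : x ∈ frontier C) (hxr : dist p x = infDist p (frontier C)) :
    dM C p x k =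
      max (circumrad C p) (2 * infDist p (frontier C) * Real.sin (Real.pi / k)) := by
  obtain ⟨hcomp, hconv, -⟩ := hC
  have hr : ‖x - p‖ = infDist p (frontier C) := by rw [← hxr, dist_comm, dist_eq_norm]
  have hball : ball p ‖x - p‖ ⊆ interior C := hr ▸ ball_infDist_frontier_subset_interior hp
  have hxC : x ∈ C := hcomp.isClosed.frontier_subset hx
  have hchord : dist x (rot p (2 * Real.pi / k) x) =
      2 * infDist p (frontier C) * Real.sin (Real.pi / k) := by
    rw [dist_self_rot_two_pi_div p x (by omega), hr]
  have hR (y : ℂ) (hy : y ∈ C) : dist p y ≤ circumrad C p :=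
    dist_le_circumrad hcomp.isBounded p hy
  have hbdd : Bornology.IsBounded (C ∩ sector p x k) := hcomp.isBounded.subset inter_subset_left
  have hpS : p ∈ C ∩ sector p x k := ⟨interior_subset hp, 0, 0, le_rfl, le_rfl, by simp⟩
  apply le_antisymm
  · refine diam_le_of_forall_dist_le (le_max_of_le_left (dist_self p ▸ hR p hpS.1))
      fun y hy z hz => hchord ▸ dist_le_max_of_mem_inter_sector hconv hk hsym hball hx.2 hR hy hz
  · refine max_le (circumrad_le diam_nonneg fun y hy => ?_) ?_
    · have hxp : x ≠ p := by rintro rfl; exact hx.2 hp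
      obtain ⟨y', hy', hyy'⟩ := exists_mem_inter_sector_dist_eq hk hsym hxp hy
      exact hyy' ▸ dist_le_diam_of_mem hbdd hpS hy'
    · exact hchord ▸ dist_le_diam_of_mem hbdd ⟨hxC, 1, 0, zero_le_one, le_rfl, by simp⟩
        ⟨(hsym : _ = C) ▸ mem_image_of_mem _ hxC, 0, 1, le_rfl, zero_le_one, by simp⟩
end

section
/- Let C be a planar convex body and p a point in its interior, and let a, b be integers with 3 ≤ a ≤ b such that C is both a-rotationally symmetric and b-rotationally symmetric about p. Then d_M(P_a) ≥ d_M(P_b), i.e. diam(C ∩ S_a) ≥ diam(C ∩ S_b). In particular, if C is multi-rotationally symmetric with minimal degree at least 3 and k_1 < k_2 < … < k_n are the divisors greater than 1 of its maximal degree, then d_M(P_{k_1}) ≥ d_M(P_{k_2}) ≥ … ≥ d_M(P_{k_n}). -/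
open Metric Set

/-
The sector `S_k` shrinks as `k` grows: for `0 ≤ β ≤ α < π` the ray of angle `β` lies in the
convex cone spanned by the rays of angles `0` and `α`, by the identity
`sin α · e^{iβ} = sin (α - β) + sin β · e^{iα}`. Hence `C ∩ S_b ⊆ C ∩ S_a` for `a ≤ b`, and
diameter is monotone on bounded sets.
-/

lemma Complex.sin_mul_exp_mul_I (α β : ℝ) :
    (Real.sin α : ℂ) * Complex.exp (β * Complex.I)
      = (Real.sin (α - β) : ℂ) + (Real.sin β : ℂ) * Complex.exp (α * Complex.I) := by
  rw [Complex.exp_mul_I, Complex.exp_mul_I]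
  push_cast [Real.sin_sub]
  ring

lemma Complex.exp_mul_I_mem_cone {α β : ℝ} (hα : 0 < α) (hαπ : α < Real.pi) (hβ : 0 ≤ β)
    (hβα : β ≤ α) :
    ∃ s t : ℝ, 0 ≤ s ∧ 0 ≤ t ∧
      Complex.exp (β * Complex.I) = s + t * Complex.exp (α * Complex.I) := by
  have hsinα : 0 < Real.sin α := Real.sin_pos_of_pos_of_lt_pi hα hαπ
  refine ⟨Real.sin (α - β) / Real.sin α, Real.sin β / Real.sin α,
    div_nonneg (Real.sin_nonneg_of_nonneg_of_le_pi (by linarith) (by linarith)) hsinα.le,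
    div_nonneg (Real.sin_nonneg_of_nonneg_of_le_pi hβ (by linarith)) hsinα.le, ?_⟩
  have hsinα' : (Real.sin α : ℂ) ≠ 0 := by exact_mod_cast hsinα.ne'
  rw [Complex.ofReal_div, Complex.ofReal_div, div_mul_eq_mul_div, ← add_div,
    eq_div_iff hsinα', mul_comm]
  exact Complex.sin_mul_exp_mul_I α β

lemma rot_sub_center (p z : ℂ) (θ : ℝ) :
    rot p θ z - p = Complex.exp (θ * Complex.I) * (z - p) := by
  simp [rot]

lemma sector_anti {a b : ℕ} (ha : 3 ≤ a) (hab : a ≤ b) (p x : ℂ) :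
    sector p x b ⊆ sector p x a := by
  have ha₀ : (0 : ℝ) < a := by positivity
  have ha₃ : (3 : ℝ) ≤ a := by exact_mod_cast ha
  have hab' : (a : ℝ) ≤ b := by exact_mod_cast hab
  obtain ⟨s', t', hs', ht', hcone⟩ := Complex.exp_mul_I_mem_cone (α := 2 * Real.pi / a)
    (β := 2 * Real.pi / b) (by positivity)
    (by rw [div_lt_iff₀ ha₀]; nlinarith [Real.pi_pos]) (by positivity)
    (div_le_div_of_nonneg_left (by positivity) ha₀ hab')
  rintro z ⟨s, t, hs, ht, rfl⟩
  refine ⟨s + t * s', t * t', by positivity, by positivity, ?_⟩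
  rw [rot_sub_center, rot_sub_center, hcone]
  push_cast
  ring

theorem stmt_4_general (C : Set ℂ) (p x : ℂ) (a b : ℕ) (hC : IsConvexBody C)
    (ha : 3 ≤ a) (hab : a ≤ b) :
    dM C p x b ≤ dM C p x a :=
  diam_mono (inter_subset_inter_right C (sector_anti ha hab p x))
    (hC.1.isBounded.subset inter_subset_left)

/-- If `C` is both `a`- and `b`-rotationally symmetric about `p`, with
`3 ≤ a ≤ b`, then `d_M(P_a) ≥ d_M(P_b)`. -/
theorem stmt_4 (C : Set ℂ) (p x : ℂ) (a b : ℕ) (hC : IsConvexBody C)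
    (ha : 3 ≤ a) (hab : a ≤ b) (hsa : IsRotSym C p a) (hsb : IsRotSym C p b)
    (hp : p ∈ interior C) (hx : x ∈ frontier C)
    (hxr : dist p x = infDist p (frontier C)) :
    dM C p x b ≤ dM C p x a :=
  stmt_4_general C p x a b hC ha hab
end
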